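/- Let G be a connected graph with degree sequence π and α ∈ [0,1), and suppose ρ(A_α(G)) is maximal among all connected graphs with degree sequence π. Let X be a unit Perron eigenvector of A_α(G). Then for any two vertices u, v: if x_u ≥ x_v and the ordering places u before v, then d(u) ≥ d(v); and if x_u = x_v, then d(u) = d(v). -/

import Mathlib

/-!
Suppose `X v ≤ X u` but `d(v) > d(u)`. Pick a set `W` of `d(v) - d(u)` neighbours of `v` outside
`N[u]` and replace the edges `vw` by `uw` (`w ∈ W`). The new graph `H` has the degree sequence of
`G` with `u` and `v` exchanged, and stays connected if `W` avoids some neighbour `y` of `v` from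
which `u` is reachable without passing through `v`. Its quadratic form at `X` exceeds `ρ` by
`α|W|(X_u² - X_v²) + 2(1-α)(X_u - X_v)∑_W X_w ≥ 0`, so by maximality of `ρ` and the Rayleigh
principle `X` is an eigenvector of `A_α(H)` for `ρ` too. Comparing the `u`-th rows of the two
eigen-equations gives `α|W|X_u + (1-α)∑_W X_w = 0`, which contradicts `X > 0`.
-/

open Matrix Finset SimpleGraph
open scoped Classical

/-- Degree of a vertex (no decidability assumptions). -/
noncomputable def deg {V : Type*} (G : SimpleGraph V) (v : V) : ℕ :=
  (G.neighborSet v).ncard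

/-- The matrix `A_alpha(G) = alpha D(G) + (1-alpha) A(G)`. -/
noncomputable def Aalpha {V : Type*} [Fintype V] (G : SimpleGraph V) (α : ℝ) :
    Matrix V V ℝ :=
  fun i j => if i = j then α * (deg G i : ℝ) else if G.Adj i j then 1 - α else 0

/-- The spectral radius (largest eigenvalue) of a real symmetric matrix,
as the supremum of its eigenvalues. -/
noncomputable def specRad {V : Type*} [Fintype V] (M : Matrix V V ℝ) : ℝ :=
  sSup {t : ℝ | ∃ x : V → ℝ, x ≠ 0 ∧ M.mulVec x = t • x}

section Rayleigh
variable {m : Type*} [Fintype m] [DecidableEq m] {M : Matrix m m ℝ}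

lemma mem_spectrum_iff_exists_mulVec_eq_smul {t : ℝ} :
    t ∈ spectrum ℝ M ↔ ∃ x : m → ℝ, x ≠ 0 ∧ M *ᵥ x = t • x := by
  rw [← spectrum_toLin', ← Module.End.hasEigenvalue_iff_mem_spectrum]
  constructor
  · intro h
    obtain ⟨x, hx⟩ := h.exists_hasEigenvector
    exact ⟨x, hx.2, by simpa using hx.apply_eq_smul⟩
  · rintro ⟨x, hx0, hx⟩
    exact Module.End.hasEigenvalue_of_hasEigenvector
      ⟨by simpa [Module.End.mem_eigenspace_iff] using hx, hx0⟩

lemma specRad_eq_sSup_spectrum : specRad M = sSup (spectrum ℝ M) := by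
  rw [specRad]
  congr 1
  ext t
  exact mem_spectrum_iff_exists_mulVec_eq_smul.symm

lemma le_specRad {t : ℝ} (ht : t ∈ spectrum ℝ M) : t ≤ specRad M := by
  rw [specRad_eq_sSup_spectrum]
  exact le_csSup M.finite_real_spectrum.bddAbove ht

open scoped MatrixOrder in
lemma posSemidef_algebraMap_specRad_sub (hM : M.IsHermitian) :
    (algebraMap ℝ (Matrix m m ℝ) (specRad M) - M).PosSemidef := by
  rw [← Matrix.le_iff]
  exact le_algebraMap_of_spectrum_le (fun t ht => le_specRad ht) hM.isSelfAdjoint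

lemma algebraMap_sub_mulVec (c : ℝ) (x : m → ℝ) :
    (algebraMap ℝ (Matrix m m ℝ) c - M) *ᵥ x = c • x - M *ᵥ x := by
  rw [sub_mulVec, Algebra.algebraMap_eq_smul_one, smul_mulVec, one_mulVec]

lemma dotProduct_mulVec_le_specRad (hM : M.IsHermitian) {x : m → ℝ} (hx : x ⬝ᵥ x = 1) :
    x ⬝ᵥ (M *ᵥ x) ≤ specRad M := by
  have h := (posSemidef_algebraMap_specRad_sub hM).dotProduct_mulVec_nonneg x
  rw [star_trivial, algebraMap_sub_mulVec, dotProduct_sub, dotProduct_smul, hx] at h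
  simpa using h

lemma mulVec_eq_specRad_smul_of_dotProduct_mulVec_eq (hM : M.IsHermitian) {x : m → ℝ}
    (hx : x ⬝ᵥ x = 1) (h : x ⬝ᵥ (M *ᵥ x) = specRad M) : M *ᵥ x = specRad M • x := by
  have h0 := ((posSemidef_algebraMap_specRad_sub hM).dotProduct_mulVec_zero_iff x).1 (by
    rw [star_trivial, algebraMap_sub_mulVec, dotProduct_sub, dotProduct_smul, hx, h]
    simp)
  rw [algebraMap_sub_mulVec, sub_eq_zero] at h0
  exact h0.symm

end Rayleigh

variable {V : Type*}

lemma deg_eq_card_neighborFinset [Fintype V] (G : SimpleGraph V) (a : V) :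
    deg G a = #(G.neighborFinset a) := by
  rw [deg, ← Set.ncard_coe_finset, coe_neighborFinset]

lemma Aalpha_mulVec_apply [Fintype V] (G : SimpleGraph V) (α : ℝ) (x : V → ℝ) (a : V) :
    (Aalpha G α *ᵥ x) a = α * deg G a * x a + (1 - α) * ∑ b ∈ G.neighborFinset a, x b := by
  have hsplit : ∀ b, Aalpha G α a b * x b =
      (if a = b then α * deg G a * x b else 0) + if G.Adj a b then (1 - α) * x b else 0 := by
    intro b
    by_cases hab : a = b
    · subst hab; simp [Aalpha]
    · simp [Aalpha, hab]
  simp only [mulVec, dotProduct, hsplit, sum_add_distrib, sum_ite_eq, mem_univ, if_true,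
    ← sum_filter, ← mul_sum, neighborFinset_eq_filter]

lemma isHermitian_Aalpha [Fintype V] (G : SimpleGraph V) (α : ℝ) : (Aalpha G α).IsHermitian :=
  IsHermitian.ext fun i j => by
    rcases eq_or_ne i j with rfl | hij
    · simp
    · simp [Aalpha, hij, hij.symm, G.adj_comm]

/-- The graph obtained from `G` by replacing the edges `vw` by `uw` for `w ∈ W`. -/
def switch (G : SimpleGraph V) (u v : V) (W : Finset V) : SimpleGraph V where
  Adj a b := a ≠ b ∧
    (G.Adj a b ∧ ¬(a = v ∧ b ∈ W) ∧ ¬(b = v ∧ a ∈ W) ∨ a = u ∧ b ∈ W ∨ b = u ∧ a ∈ W)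
  symm := ⟨fun a b ⟨hne, h⟩ => ⟨hne.symm, by rw [G.adj_comm]; tauto⟩⟩
  loopless := ⟨fun _ h => h.1 rfl⟩

def Switchable (G : SimpleGraph V) (u v : V) (W : Finset V) : Prop :=
  ∀ w ∈ W, G.Adj v w ∧ ¬G.Adj u w ∧ w ≠ u

section switch

variable {G : SimpleGraph V} {u v : V} {W : Finset V}

lemma switch_adj {a b : V} : (switch G u v W).Adj a b ↔ a ≠ b ∧
    (G.Adj a b ∧ ¬(a = v ∧ b ∈ W) ∧ ¬(b = v ∧ a ∈ W) ∨ a = u ∧ b ∈ W ∨ b = u ∧ a ∈ W) :=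
  Iff.rfl

lemma switch_adj_of_adj {a b : V} (h : G.Adj a b) (ha : ¬(a = v ∧ b ∈ W))
    (hb : ¬(b = v ∧ a ∈ W)) : (switch G u v W).Adj a b :=
  ⟨h.ne, Or.inl ⟨h, ha, hb⟩⟩

namespace Switchable

variable (hW : Switchable G u v W)
include hW

lemma left_notMem : u ∉ W := fun h => (hW u h).2.2 rfl

lemma right_notMem : v ∉ W := fun h => (hW v h).1.ne rfl

lemma switch_adj_left {w : V} (hw : w ∈ W) : (switch G u v W).Adj u w :=
  ⟨(hW w hw).2.2.symm, Or.inr (Or.inl ⟨rfl, hw⟩)⟩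

variable [Fintype V]

lemma disjoint_neighborFinset_left : Disjoint (G.neighborFinset u) W :=
  disjoint_right.2 fun w hw => by simpa using (hW w hw).2.1

lemma subset_neighborFinset_right : W ⊆ G.neighborFinset v :=
  fun w hw => by simpa using (hW w hw).1

lemma right_mem_neighborFinset {a : V} (ha : a ∈ W) : v ∈ G.neighborFinset a := by
  simpa [G.adj_comm] using (hW a ha).1

lemma left_notMem_erase_neighborFinset {a : V} (ha : a ∈ W) :
    u ∉ (G.neighborFinset a).erase v := by
  simpa [G.adj_comm] using fun _ => (hW a ha).2.1

lemma neighborFinset_switch_left :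
    (switch G u v W).neighborFinset u = G.neighborFinset u ∪ W := by
  ext b
  have := hW b
  have := hW.left_notMem
  simp only [mem_neighborFinset, switch_adj, mem_union]
  grind [Adj.ne]

lemma neighborFinset_switch_right :
    (switch G u v W).neighborFinset v = G.neighborFinset v \ W := by
  ext b
  have := hW b
  have := hW.right_notMem
  simp only [mem_neighborFinset, switch_adj, mem_sdiff]
  grind [Adj.ne]

lemma neighborFinset_switch_of_mem {a : V} (ha : a ∈ W) :
    (switch G u v W).neighborFinset a = insert u ((G.neighborFinset a).erase v) := by
  ext b
  have := hW a ha
  have := hW b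
  have := hW.left_notMem
  have := hW.right_notMem
  simp only [mem_neighborFinset, switch_adj, mem_insert, mem_erase]
  grind [Adj.ne, G.adj_comm]

lemma deg_switch_left : deg (switch G u v W) u = deg G u + #W := by
  rw [deg_eq_card_neighborFinset, deg_eq_card_neighborFinset, hW.neighborFinset_switch_left,
    card_union_of_disjoint hW.disjoint_neighborFinset_left]

lemma deg_switch_right : deg (switch G u v W) v = deg G v - #W := by
  rw [deg_eq_card_neighborFinset, deg_eq_card_neighborFinset, hW.neighborFinset_switch_right,
    card_sdiff_of_subset hW.subset_neighborFinset_right]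

end Switchable

lemma neighborFinset_switch_of_notMem [Fintype V] {a : V} (hau : a ≠ u) (hav : a ≠ v)
    (ha : a ∉ W) : (switch G u v W).neighborFinset a = G.neighborFinset a := by
  ext b
  simp only [mem_neighborFinset, switch_adj]
  grind [Adj.ne]

variable [Fintype V]

lemma Switchable.deg_switch_of_ne (hW : Switchable G u v W) {a : V} (hau : a ≠ u) (hav : a ≠ v) :
    deg (switch G u v W) a = deg G a := by
  rw [deg_eq_card_neighborFinset, deg_eq_card_neighborFinset]
  by_cases ha : a ∈ W
  · rw [hW.neighborFinset_switch_of_mem ha,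
      card_insert_of_notMem (hW.left_notMem_erase_neighborFinset ha),
      card_erase_add_one (hW.right_mem_neighborFinset ha)]
  · rw [neighborFinset_switch_of_notMem hau hav ha]

lemma Switchable.deg_switch_swap (hW : Switchable G u v W) (hWcard : #W = deg G v - deg G u)
    (hd : deg G u ≤ deg G v) (i : V) : deg (switch G u v W) (Equiv.swap u v i) = deg G i := by
  rcases eq_or_ne i u with rfl | hiu
  · rw [Equiv.swap_apply_left, hW.deg_switch_right]; omega
  rcases eq_or_ne i v with rfl | hiv
  · rw [Equiv.swap_apply_right, hW.deg_switch_left]; omega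
  rw [Equiv.swap_apply_of_ne_of_ne hiu hiv, hW.deg_switch_of_ne hiu hiv]

lemma Switchable.Aalpha_switch_mulVec_apply (hW : Switchable G u v W) (huv : u ≠ v) (α : ℝ)
    (x : V → ℝ) (a : V) :
    (Aalpha (switch G u v W) α *ᵥ x) a = (Aalpha G α *ᵥ x) a
      + (if a = u then α * #W * x u + (1 - α) * ∑ w ∈ W, x w else 0)
      - (if a = v then α * #W * x v + (1 - α) * ∑ w ∈ W, x w else 0)
      + (if a ∈ W then (1 - α) * (x u - x v) else 0) := by
  simp only [Aalpha_mulVec_apply]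
  by_cases hau : a = u
  · subst hau
    rw [hW.deg_switch_left, hW.neighborFinset_switch_left,
      sum_union hW.disjoint_neighborFinset_left]
    simp [huv, hW.left_notMem]
    ring
  by_cases hav : a = v
  · subst hav
    have hWd : #W ≤ deg G a :=
      deg_eq_card_neighborFinset G a ▸ card_le_card hW.subset_neighborFinset_right
    rw [hW.deg_switch_right, hW.neighborFinset_switch_right,
      sum_sdiff_eq_sub hW.subset_neighborFinset_right, Nat.cast_sub hWd]
    simp [hau, hW.right_notMem]
    ring
  rw [hW.deg_switch_of_ne hau hav]
  by_cases ha : a ∈ W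
  · rw [hW.neighborFinset_switch_of_mem ha,
      sum_insert (hW.left_notMem_erase_neighborFinset ha),
      sum_erase_eq_sub (hW.right_mem_neighborFinset ha)]
    simp [hau, hav, ha]
    ring
  · simp [neighborFinset_switch_of_notMem hau hav ha, hau, hav, ha]

lemma Switchable.dotProduct_Aalpha_switch_mulVec (hW : Switchable G u v W) (huv : u ≠ v)
    (α : ℝ) (x : V → ℝ) :
    x ⬝ᵥ (Aalpha (switch G u v W) α *ᵥ x) = x ⬝ᵥ (Aalpha G α *ᵥ x)
      + α * #W * (x u ^ 2 - x v ^ 2) + 2 * (1 - α) * (x u - x v) * ∑ w ∈ W, x w := by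
  have hW_term : ∑ a ∈ W, x a * ((1 - α) * (x u - x v)) =
      (1 - α) * (x u - x v) * ∑ w ∈ W, x w := by
    rw [← sum_mul, mul_comm]
  simp only [dotProduct, hW.Aalpha_switch_mulVec_apply huv, mul_add, mul_sub (x _),
    sum_add_distrib, sum_sub_distrib, mul_ite, mul_zero, sum_ite_eq', mem_univ, if_true,
    sum_ite_mem, univ_inter, hW_term]
  ring

end switch

section switchConnected

variable {G : SimpleGraph V} {u v : V} {W : Finset V}

lemma reachable_switch_of_walk {a b : V} (p : G.Walk a b) (hp : v ∉ p.support) :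
    (switch G u v W).Reachable a b := by
  refine ⟨p.transfer _ fun e he => ?_⟩
  induction e using Sym2.ind with
  | _ x y =>
    have hx : x ≠ v := fun h => hp (h ▸ p.fst_mem_support_of_mem_edges he)
    have hy : y ≠ v := fun h => hp (h ▸ p.snd_mem_support_of_mem_edges he)
    exact switch_adj_of_adj (p.adj_of_mem_edges he) (fun h => hx h.1) (fun h => hy h.1)

lemma Switchable.connected_switch (hW : Switchable G u v W) (hG : G.Connected)
    (hvu : (switch G u v W).Reachable v u) : (switch G u v W).Connected := by
  have step : ∀ a y, G.Adj a y → (switch G u v W).Reachable y u →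
      (switch G u v W).Reachable a u := by
    intro a y h hy
    by_cases hH : (switch G u v W).Adj a y
    · exact hH.reachable.trans hy
    by_cases ha : a = v
    · exact ha ▸ hvu
    have haW : a ∈ W := by
      by_contra haW
      exact hH (switch_adj_of_adj h (fun h => ha h.1) (fun h => haW h.2))
    exact (hW.switch_adj_left haW).symm.reachable
  have of_walk : ∀ a b, G.Walk a b → (switch G u v W).Reachable b u →
      (switch G u v W).Reachable a u := by
    intro a b p
    induction p with
    | nil => exact id
    | cons h _ ih => exact fun hb => step _ _ h (ih hb)
  have reach_u : ∀ a, (switch G u v W).Reachable a u := fun a =>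
    of_walk a u (hG.preconnected a u).some (Reachable.refl u)
  exact (connected_iff _).2 ⟨fun a b => (reach_u a).trans (reach_u b).symm, ⟨u⟩⟩

end switchConnected

section switchable
variable [Fintype V] {G : SimpleGraph V} {u v : V}

lemma card_neighborFinset_inter_insert_le :
    #(G.neighborFinset v ∩ insert u (G.neighborFinset u)) ≤ deg G u := by
  rw [deg_eq_card_neighborFinset]
  refine card_le_card_of_injOn (Equiv.swap u v) (fun w hw => ?_) (Equiv.swap u v).injective.injOn
  simp only [coe_inter, Set.mem_inter_iff, mem_coe, mem_neighborFinset, mem_insert] at hw ⊢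
  obtain ⟨hvw, rfl | huw⟩ := hw
  · simpa [Equiv.swap_apply_left] using hvw.symm
  · rwa [Equiv.swap_apply_of_ne_of_ne huw.ne' hvw.ne']

-- The edge `vy` followed by `p` survives every switch with `y ∉ W`, keeping `v` joined to `u`.
lemma exists_adj_walk_avoiding (hG : G.Connected) (huv : u ≠ v) :
    ∃ y, G.Adj v y ∧ (∃ p : G.Walk y u, v ∉ p.support) ∧
      deg G v - deg G u ≤ #((G.neighborFinset v \ insert u (G.neighborFinset u)).erase y) := by
  by_cases hcommon : ∃ y ∈ insert u (G.neighborFinset u), G.Adj v y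
  · obtain ⟨y, hy, hvy⟩ := hcommon
    refine ⟨y, hvy, ?_, ?_⟩
    · rcases mem_insert.1 hy with rfl | huy
      · exact ⟨Walk.nil, by simpa using huv.symm⟩
      · exact ⟨((G.mem_neighborFinset u y).1 huy).symm.toWalk, by simp [huv.symm, hvy.ne]⟩
    · have := card_sdiff_add_card_inter (G.neighborFinset v) (insert u (G.neighborFinset u))
      have := card_neighborFinset_inter_insert_le (G := G) (u := u) (v := v)
      rw [erase_eq_of_notMem fun h => (mem_sdiff.1 h).2 hy, deg_eq_card_neighborFinset G v]
      omega
  · simp only [not_exists, not_and] at hcommon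
    obtain ⟨p, hp⟩ := (hG.preconnected v u).some.toPath
    cases p with
    | nil => exact absurd rfl huv
    | cons hvy q =>
      refine ⟨_, hvy, ⟨q, ((Walk.cons_isPath_iff hvy q).1 hp).2⟩, ?_⟩
      have hdisj : Disjoint (G.neighborFinset v) (insert u (G.neighborFinset u)) :=
        disjoint_right.2 fun y hy h => hcommon y hy ((G.mem_neighborFinset v y).1 h)
      have hdu : 0 < deg G u := by
        rw [deg_eq_card_neighborFinset, card_neighborFinset_eq_degree]
        exact (hG.preconnected u _).degree_pos_left huv
      rw [sdiff_eq_self_of_disjoint hdisj, card_erase_of_mem ((G.mem_neighborFinset _ _).2 hvy),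
        ← deg_eq_card_neighborFinset]
      omega

lemma exists_switchable (hG : G.Connected) (huv : u ≠ v) :
    ∃ W : Finset V, #W = deg G v - deg G u ∧ Switchable G u v W ∧
      (switch G u v W).Reachable v u := by
  obtain ⟨y, hvy, ⟨p, hp⟩, hcard⟩ := exists_adj_walk_avoiding hG huv
  obtain ⟨W, hWsub, hWcard⟩ := exists_subset_card_eq hcard
  have hW : Switchable G u v W := by
    intro w hw
    have := hWsub hw
    simp only [mem_erase, mem_sdiff, mem_neighborFinset, mem_insert] at this
    tauto
  have hyW : y ∉ W := fun h => by simpa using hWsub h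
  refine ⟨W, hWcard, hW, ?_⟩
  exact (switch_adj_of_adj hvy (fun h => hyW h.2) (fun h => hvy.ne' h.1)).reachable.trans
    (reachable_switch_of_walk p hp)

end switchable

lemma deg_le_deg_of_apply_le [Fintype V] {G : SimpleGraph V} (hG : G.Connected) {α : ℝ}
    (hα0 : 0 ≤ α) (hα1 : α < 1)
    (hmax : ∀ H : SimpleGraph V, H.Connected → (∃ e : V ≃ V, ∀ i, deg H (e i) = deg G i) →
      specRad (Aalpha H α) ≤ specRad (Aalpha G α))
    {X : V → ℝ} (hXpos : ∀ i, 0 < X i) (hXunit : X ⬝ᵥ X = 1)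
    (hXeig : Aalpha G α *ᵥ X = specRad (Aalpha G α) • X) {u v : V} (hX : X v ≤ X u) :
    deg G v ≤ deg G u := by
  by_contra! hd
  have huv : u ≠ v := by rintro rfl; exact lt_irrefl _ hd
  obtain ⟨W, hWcard, hW, hreach⟩ := exists_switchable hG huv
  set H := switch G u v W
  set ρ := specRad (Aalpha G α)
  have hS : 0 < ∑ w ∈ W, X w := sum_pos (fun w _ => hXpos w) (card_pos.1 (by omega))
  have hρH : specRad (Aalpha H α) ≤ ρ :=
    hmax H (hW.connected_switch hG hreach) ⟨_, hW.deg_switch_swap hWcard hd.le⟩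
  have hgain : ρ ≤ X ⬝ᵥ (Aalpha H α *ᵥ X) := by
    rw [hW.dotProduct_Aalpha_switch_mulVec huv, hXeig, dotProduct_smul, hXunit, smul_eq_mul,
      mul_one]
    have := hXpos v
    have : 0 ≤ α * #W * (X u ^ 2 - X v ^ 2) := by
      apply mul_nonneg (by positivity); nlinarith
    have : 0 ≤ 2 * (1 - α) * (X u - X v) * ∑ w ∈ W, X w := by
      apply mul_nonneg _ hS.le; apply mul_nonneg <;> linarith
    linarith
  have heig : Aalpha H α *ᵥ X = ρ • X := by
    have hH := isHermitian_Aalpha H α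
    have hRay := dotProduct_mulVec_le_specRad hH hXunit
    rw [mulVec_eq_specRad_smul_of_dotProduct_mulVec_eq hH hXunit (by linarith),
      le_antisymm hρH (hgain.trans hRay)]
  have hrow := congrFun heig u
  rw [hW.Aalpha_switch_mulVec_apply huv, hXeig] at hrow
  simp only [Pi.smul_apply, smul_eq_mul, if_true, huv, if_false, hW.left_notMem]
    at hrow
  have : 0 < α * #W * X u + (1 - α) * ∑ w ∈ W, X w := by
    have := hXpos u
    have : 0 ≤ α * #W * X u := by positivity
    nlinarith
  linarith

theorem stmt_3 {n : ℕ} (G : SimpleGraph (Fin n)) (hG : G.Connected)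
    (α : ℝ) (hα0 : 0 ≤ α) (hα1 : α < 1)
    (hmax : ∀ H : SimpleGraph (Fin n), H.Connected →
      (∃ e : Fin n ≃ Fin n, ∀ i, deg H (e i) = deg G i) →
      specRad (Aalpha H α) ≤ specRad (Aalpha G α))
    (X : Fin n → ℝ) (hXpos : ∀ i, 0 < X i) (hXunit : ∑ i, X i ^ 2 = 1)
    (hXeig : (Aalpha G α) *ᵥ X = specRad (Aalpha G α) • X) :
    (∀ u v : Fin n, X v ≤ X u → deg G v ≤ deg G u) ∧
    (∀ u v : Fin n, X u = X v → deg G u = deg G v) := by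
  have hXunit' : X ⬝ᵥ X = 1 := by simpa [dotProduct, sq] using hXunit
  have key : ∀ u v : Fin n, X v ≤ X u → deg G v ≤ deg G u := fun u v =>
    deg_le_deg_of_apply_le hG hα0 hα1 hmax hXpos hXunit' hXeig
  exact ⟨key, fun u v h => le_antisymm (key v u h.le) (key u v h.ge)⟩
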